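/- Fix η, γ ∈ ℝ and define g(z) = z / ((1 + z e^{i(η+γ)})(1 + z e^{-i(η-γ)})) on the open unit disc 𝔻. Then g is starlike on 𝔻, i.e., g is injective on 𝔻, g(0) = 0, g'(0) = 1, and Re(z g'(z)/g(z)) > 0 for all nonzero z ∈ 𝔻. -/

import Mathlib

/-!
Write `g z = z / ((1 + a z)(1 + b z))` with `|a|, |b| ≤ 1`. Then
`g z - g w = (z - w)(1 - a b z w) / ((1 + a z)(1 + b z)(1 + a w)(1 + b w))`
and `|a b z w| < 1` on the disc, so `g` is injective.
Logarithmic differentiation gives `z g'(z) / g(z) = 1/(1 + a z) + 1/(1 + b z) - 1`, and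
`1/(1 + w)` maps the unit disc into the half-plane `Re > 1/2`.
-/

open Metric

section NormedRing

variable {R : Type*} [SeminormedRing R]

lemma one_add_ne_zero_of_norm_lt_one [NormOneClass R] {w : R} (hw : ‖w‖ < 1) : 1 + w ≠ 0 := by
  intro h
  rw [eq_neg_of_add_eq_zero_right h, norm_neg, norm_one] at hw
  exact lt_irrefl _ hw

lemma norm_mul_lt_one_of_lt_of_le {z a : R} (hz : ‖z‖ < 1) (ha : ‖a‖ ≤ 1) : ‖z * a‖ < 1 :=
  (norm_mul_le z a).trans_lt (mul_lt_one_of_nonneg_of_lt_one_left (norm_nonneg z) hz ha)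

end NormedRing

namespace Complex

lemma half_lt_re_inv_one_add {w : ℂ} (hw : ‖w‖ < 1) : 1 / 2 < (1 + w)⁻¹.re := by
  have hpos : 0 < normSq (1 + w) := normSq_pos.mpr (one_add_ne_zero_of_norm_lt_one hw)
  have hw2 : normSq w < 1 := by
    rw [normSq_eq_norm_sq]
    exact pow_lt_one₀ (norm_nonneg w) hw two_ne_zero
  rw [inv_re, lt_div_iff₀ hpos]
  rw [normSq_apply] at hw2 ⊢
  simp only [add_re, add_im, one_re, one_im]
  nlinarith

end Complex

open Complex

noncomputable def pommerenkeFun (a b z : ℂ) : ℂ := z / ((1 + z * a) * (1 + z * b))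

namespace pommerenkeFun

variable {a b : ℂ}

lemma hasDerivAt {z : ℂ} (hza : 1 + z * a ≠ 0) (hzb : 1 + z * b ≠ 0) :
    HasDerivAt (pommerenkeFun a b) ((1 - a * b * z ^ 2) / ((1 + z * a) * (1 + z * b)) ^ 2) z := by
  have hden : HasDerivAt (fun z : ℂ => (1 + z * a) * (1 + z * b))
      (a * (1 + z * b) + (1 + z * a) * b) z := by
    simpa using (((hasDerivAt_id z).mul_const a).const_add 1).fun_mul
      (((hasDerivAt_id z).mul_const b).const_add 1)
  refine ((hasDerivAt_id' z).fun_div hden (mul_ne_zero hza hzb)).congr_deriv ?_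
  ring

section UnitDisc

variable (ha : ‖a‖ ≤ 1) (hb : ‖b‖ ≤ 1)
include ha hb

lemma injOn_ball : Set.InjOn (pommerenkeFun a b) (ball 0 1) := by
  intro z hz w hw hzw
  rw [mem_ball_zero_iff] at hz hw
  have hza := one_add_ne_zero_of_norm_lt_one (norm_mul_lt_one_of_lt_of_le hz ha)
  have hzb := one_add_ne_zero_of_norm_lt_one (norm_mul_lt_one_of_lt_of_le hz hb)
  have hwa := one_add_ne_zero_of_norm_lt_one (norm_mul_lt_one_of_lt_of_le hw ha)
  have hwb := one_add_ne_zero_of_norm_lt_one (norm_mul_lt_one_of_lt_of_le hw hb)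
  have hfactor : (z - w) * (1 + -(a * b * (z * w))) = 0 := by
    rw [pommerenkeFun, pommerenkeFun, div_eq_div_iff (mul_ne_zero hza hzb)
      (mul_ne_zero hwa hwb)] at hzw
    linear_combination hzw
  have habzw : ‖-(a * b * (z * w))‖ < 1 := by
    rw [norm_neg, mul_comm, ← mul_assoc]
    exact norm_mul_lt_one_of_lt_of_le
      (norm_mul_lt_one_of_lt_of_le (norm_mul_lt_one_of_lt_of_le hz hw.le) ha) hb
  simpa [sub_eq_zero, one_add_ne_zero_of_norm_lt_one habzw] using hfactor

lemma deriv_eq {z : ℂ} (hz : ‖z‖ < 1) :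
    deriv (pommerenkeFun a b) z = (1 - a * b * z ^ 2) / ((1 + z * a) * (1 + z * b)) ^ 2 :=
  (hasDerivAt (one_add_ne_zero_of_norm_lt_one (norm_mul_lt_one_of_lt_of_le hz ha))
    (one_add_ne_zero_of_norm_lt_one (norm_mul_lt_one_of_lt_of_le hz hb))).deriv

lemma mul_deriv_div_self {z : ℂ} (hz : ‖z‖ < 1) (hz0 : z ≠ 0) :
    z * deriv (pommerenkeFun a b) z / pommerenkeFun a b z =
      (1 + z * a)⁻¹ + (1 + z * b)⁻¹ - 1 := by
  have hza := one_add_ne_zero_of_norm_lt_one (norm_mul_lt_one_of_lt_of_le hz ha)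
  have hzb := one_add_ne_zero_of_norm_lt_one (norm_mul_lt_one_of_lt_of_le hz hb)
  rw [deriv_eq ha hb hz, pommerenkeFun]
  field_simp
  ring

lemma re_mul_deriv_div_self_pos {z : ℂ} (hz : ‖z‖ < 1) (hz0 : z ≠ 0) :
    0 < (z * deriv (pommerenkeFun a b) z / pommerenkeFun a b z).re := by
  rw [mul_deriv_div_self ha hb hz hz0, sub_re, add_re, one_re]
  linarith [half_lt_re_inv_one_add (norm_mul_lt_one_of_lt_of_le hz ha),
    half_lt_re_inv_one_add (norm_mul_lt_one_of_lt_of_le hz hb)]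

end UnitDisc

end pommerenkeFun

open Metric Complex in
theorem stmt_10 (η γ : ℝ)
    (g : ℂ → ℂ)
    (hg : ∀ z, g z = z / ((1 + z * Complex.exp ((η + γ) * Complex.I)) *
      (1 + z * Complex.exp (-(η - γ) * Complex.I)))) :
    Set.InjOn g (ball (0 : ℂ) 1) ∧ g 0 = 0 ∧ deriv g 0 = 1 ∧
      ∀ z ∈ ball (0 : ℂ) 1, z ≠ 0 → (z * deriv g z / g z).re > 0 := by
  have ha : ‖exp ((η + γ) * I)‖ ≤ 1 := by
    rw [← ofReal_add, norm_exp_ofReal_mul_I]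
  have hb : ‖exp (-(η - γ) * I)‖ ≤ 1 := by
    rw [← ofReal_sub, ← ofReal_neg, norm_exp_ofReal_mul_I]
  obtain rfl : g = pommerenkeFun _ _ := funext hg
  refine ⟨pommerenkeFun.injOn_ball ha hb, by simp [pommerenkeFun], ?_, ?_⟩
  · rw [pommerenkeFun.deriv_eq ha hb (by simp)]
    simp
  · intro z hz hz0
    exact pommerenkeFun.re_mul_deriv_div_self_pos ha hb (mem_ball_zero_iff.mp hz) hz0
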